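/- For all integers N ≥ 2 and n ≥ 1, B_{N,n} = (N/(N+n)) · ( B_{N−1,n} + ∑_{m=1}^{n−1} C(n, n−m+1) · B_{N,m} · B_{N−1,n−m+1} ), where C(a,b) denotes the binomial coefficient. -/

import Mathlib

/-!
Write `F_N = ∑ N!/(N+i)! xⁱ`, so that `F_N⁻¹ = ∑ B_{N,n} xⁿ/n!`. Comparing coefficients gives
`N F_{N-1} = N + x F_N` and `x F_N' = N (F_{N-1} - F_N)`; together they yield
`F_N' (F_{N-1} - 1) = F_N (F_{N-1} - F_N)` (both sides are `x F_N F_N' / N`). Dividing by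
`F_N² F_{N-1}` turns this into `G_N + G_N' = G_{N-1} + G_N' G_{N-1}` for `G_N = F_N⁻¹`. Its
`n`-th coefficient, times `n!`, is a binomial convolution of the `B`'s; in it `B_{N,n+1}` cancels
and the term `n B_{N,n} B_{N-1,1} = -n B_{N,n} / N` moves to the left, which gives the factor
`N / (N + n)`.
-/

/-- The power series ∑_{i≥0} (N!/(N+i)!) xⁱ over ℚ. -/
noncomputable def hgSeries (N : ℕ) : PowerSeries ℚ :=
  PowerSeries.mk fun i => (N.factorial : ℚ) / ((N + i).factorial : ℚ)

/-- The hypergeometric Bernoulli number `B_{N,n}`, defined so that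
`∑ (B_{N,n}/n!) xⁿ` is the multiplicative inverse of `hgSeries N` in ℚ[[x]]. -/
noncomputable def hB (N n : ℕ) : ℚ :=
  (n.factorial : ℚ) * PowerSeries.coeff n (hgSeries N)⁻¹

open PowerSeries Finset Nat

namespace PowerSeries

section CommSemiring

variable {R : Type*} [CommSemiring R]

theorem factorial_mul_coeff_derivative (f : R⟦X⟧) (n : ℕ) :
    (n ! : R) * coeff n (d⁄dX R f) = ((n + 1)! : R) * coeff (n + 1) f := by
  rw [coeff_derivative, factorial_succ]
  push_cast
  ring

theorem factorial_mul_coeff_mul (f g : R⟦X⟧) (n : ℕ) :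
    (n ! : R) * coeff n (f * g) = ∑ i ∈ range (n + 1),
      (n.choose i : R) * ((i ! : R) * coeff i f) * (((n - i)! : R) * coeff (n - i) g) := by
  rw [coeff_mul, Nat.sum_antidiagonal_eq_sum_range_succ (fun i j => coeff i f * coeff j g),
    mul_sum]
  refine sum_congr rfl fun i hi => ?_
  have hfac : (n.choose i * i ! * (n - i)! : R) = n ! := by
    exact_mod_cast congrArg (Nat.cast : ℕ → R)
      (choose_mul_factorial_mul_factorial (mem_range_succ_iff.mp hi))
  rw [← hfac]
  ring

end CommSemiring

section Field

variable {k : Type*} [Field k]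

theorem coeff_one_inv (F : k⟦X⟧) (hF : constantCoeff F = 1) : coeff 1 F⁻¹ = -coeff 1 F := by
  rw [coeff_inv]
  simp [hF, antidiagonal_succ]

theorem inv_add_derivative_inv_of_derivative_mul (F H : k⟦X⟧) (hF : constantCoeff F ≠ 0)
    (hH : constantCoeff H ≠ 0) (h : d⁄dX k F * (H - 1) = F * (H - F)) :
    F⁻¹ + d⁄dX k F⁻¹ = H⁻¹ + d⁄dX k F⁻¹ * H⁻¹ := by
  have hFinv : F * F⁻¹ = 1 := PowerSeries.mul_inv_cancel F hF
  have hHinv : H * H⁻¹ = 1 := PowerSeries.mul_inv_cancel H hH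
  rw [derivative_inv']
  linear_combination (-(F⁻¹ ^ 2 * H⁻¹)) * h + F⁻¹ ^ 2 * (d⁄dX k F - F) * hHinv
    + (H⁻¹ * (F⁻¹ * F + 1) - F⁻¹) * hFinv

end Field

end PowerSeries

@[simp]
theorem coeff_hgSeries (N i : ℕ) : coeff i (hgSeries N) = (N ! : ℚ) / ((N + i)! : ℚ) := by
  simp [hgSeries]

@[simp]
theorem constantCoeff_hgSeries (N : ℕ) : constantCoeff (hgSeries N) = 1 := by
  rw [← coeff_zero_eq_constantCoeff_apply, coeff_hgSeries, add_zero,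
    div_self (by positivity)]

theorem C_succ_mul_hgSeries (M : ℕ) :
    C ((M : ℚ) + 1) * hgSeries M = C ((M : ℚ) + 1) + X * hgSeries (M + 1) := by
  ext (_ | j)
  · simp
  · rw [coeff_C_mul, map_add, coeff_C, coeff_succ_X_mul, coeff_hgSeries, coeff_hgSeries,
      if_neg (succ_ne_zero j), show M + (j + 1) = M + 1 + j by omega, factorial_succ M]
    push_cast
    ring

theorem X_mul_derivative_hgSeries_succ (M : ℕ) :
    X * d⁄dX ℚ (hgSeries (M + 1)) = C ((M : ℚ) + 1) * (hgSeries M - hgSeries (M + 1)) := by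
  ext (_ | j)
  · simp
  · rw [coeff_succ_X_mul, coeff_derivative, coeff_C_mul, map_sub, coeff_hgSeries, coeff_hgSeries,
      show M + (j + 1) = M + 1 + j by omega, show M + 1 + (j + 1) = M + 1 + j + 1 by omega,
      factorial_succ M, factorial_succ (M + 1 + j)]
    have : ((M + 1 + j)! : ℚ) ≠ 0 := by positivity
    field_simp
    push_cast
    ring

theorem derivative_hgSeries_succ_mul (M : ℕ) :
    d⁄dX ℚ (hgSeries (M + 1)) * (hgSeries M - 1) =
      hgSeries (M + 1) * (hgSeries M - hgSeries (M + 1)) := by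
  have hC : C ((M : ℚ) + 1) * X ≠ 0 :=
    mul_ne_zero ((map_ne_zero_iff _ C_injective).mpr (by positivity)) X_ne_zero
  apply mul_left_cancel₀ hC
  linear_combination X * hgSeries (M + 1) * X_mul_derivative_hgSeries_succ M
    + X * d⁄dX ℚ (hgSeries (M + 1)) * C_succ_mul_hgSeries M

theorem inv_hgSeries_succ_add_derivative (M : ℕ) :
    (hgSeries (M + 1))⁻¹ + d⁄dX ℚ (hgSeries (M + 1))⁻¹ =
      (hgSeries M)⁻¹ + d⁄dX ℚ (hgSeries (M + 1))⁻¹ * (hgSeries M)⁻¹ :=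
  inv_add_derivative_inv_of_derivative_mul _ _ (by simp) (by simp) (derivative_hgSeries_succ_mul M)

@[simp]
theorem hB_zero (N : ℕ) : hB N 0 = 1 := by
  simp [hB]

theorem hB_one (N : ℕ) : hB N 1 = -1 / ((N : ℚ) + 1) := by
  rw [hB, coeff_one_inv _ (constantCoeff_hgSeries N), coeff_hgSeries, factorial_succ N]
  have : (N ! : ℚ) ≠ 0 := by positivity
  field_simp
  push_cast
  ring

theorem hB_succ_add_hB_succ_succ (M n : ℕ) :
    hB (M + 1) n + hB (M + 1) (n + 1) =
      hB M n + ∑ i ∈ range (n + 1), (n.choose i : ℚ) * hB (M + 1) (i + 1) * hB M (n - i) := by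
  have h := congrArg (fun f => (n ! : ℚ) * coeff n f) (inv_hgSeries_succ_add_derivative M)
  simp only [map_add, mul_add, factorial_mul_coeff_mul, factorial_mul_coeff_derivative] at h
  simpa only [hB] using h

theorem stmt8 (N n : ℕ) (hN : 2 ≤ N) (hn : 1 ≤ n) :
    hB N n = ((N : ℚ) / ((N : ℚ) + n)) *
      (hB (N - 1) n + ∑ m ∈ Finset.Icc 1 (n - 1),
        (n.choose (n - m + 1) : ℚ) * hB N m * hB (N - 1) (n - m + 1)) := by
  obtain ⟨M, rfl⟩ : ∃ M, N = M + 1 := ⟨N - 1, by omega⟩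
  obtain ⟨p, rfl⟩ : ∃ p, n = p + 1 := ⟨n - 1, by omega⟩
  have hsum : ∑ m ∈ Icc 1 p,
        ((p + 1).choose (p + 1 - m + 1) : ℚ) * hB (M + 1) m * hB M (p + 1 - m + 1) =
      ∑ i ∈ range p, ((p + 1).choose i : ℚ) * hB (M + 1) (i + 1) * hB M (p + 1 - i) := by
    rw [← Ico_add_one_right_eq_Icc, range_eq_Ico, ← sum_Ico_add' _ 0 p 1]
    refine sum_congr rfl fun i hi => ?_
    have hip : i ≤ p := (mem_Ico.mp hi).2.le
    rw [show p + 1 - (i + 1) + 1 = p + 1 - i by omega,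
      choose_symm_of_eq_add (show p + 1 = p + 1 - i + i by omega)]
  have hrec := hB_succ_add_hB_succ_succ M (p + 1)
  rw [sum_range_succ, sum_range_succ, ← hsum, Nat.sub_self, show p + 1 - p = 1 by omega,
    hB_one, hB_zero, choose_self, choose_succ_self_right] at hrec
  simp only [add_tsub_cancel_right]
  push_cast at hrec ⊢
  field_simp at hrec ⊢
  linear_combination hrec
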